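/- If the split chain (Φ̌_n) admits an invariant probability measure π̌ on B(X̌), then the measure π on B(X) defined by π(Γ) = π̌(Γ_0) + π̌(Γ_1) is an invariant probability measure for the original chain (Φ_n), and moreover π̌ = π*. -/

import Mathlib

open MeasureTheory ProbabilityTheory

variable {X : Type*} [MeasurableSpace X]

/-- The splitting `λ*` of a measure `λ` on `X`:
`λ*(A₀) = (1−δ)λ(A∩C) + λ(A∩Cᶜ)`, `λ*(A₁) = δλ(A∩C)`. -/
noncomputable def splitMeasure (C : Set X) (δ : ℝ) (μ0 : Measure X) :
    Measure (X × Bool) :=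
  Measure.map (fun x => (x, false))
      (ENNReal.ofReal (1 - δ) • μ0.restrict C + μ0.restrict Cᶜ)
    + Measure.map (fun x => (x, true)) (ENNReal.ofReal δ • μ0.restrict C)

open Classical in
/-- The kernel `Q` of the split-chain construction. -/
noncomputable def splitQ (P : Kernel X X) (ν : Measure X) (C : Set X) (δ : ℝ)
    (xs : X × Bool) : Measure X :=
  if xs.2 = true then ν
  else if xs.1 ∈ C then
    (ENNReal.ofReal (1 - δ))⁻¹ • ((P xs.1) - ENNReal.ofReal δ • ν)
  else P xs.1

/-- The split (Nummelin) transition kernel `P̌(xs,·) = Q(xs,·)*`. -/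
noncomputable def splitKernel (P : Kernel X X) (ν : Measure X) (C : Set X)
    (δ : ℝ) (xs : X × Bool) : Measure (X × Bool) :=
  splitMeasure C δ (splitQ P ν C δ xs)

/-!
Since every split measure `λ*` projects back to `λ`, reading the invariance equation
`π̌ = ∫ Q(x̌, ·)* dπ̌(x̌)` on sets `Γ × Bool` gives `π = ∫ Q(x̌, ·) dπ̌(x̌)`; splitting commutes
with such mixtures, so `π̌ = π*`. Invariance of `π` then comes from the identity
`(1 - δ) Q((x, 0), ·) + δ ν = P(x, ·)` for `x ∈ C`, which makes `Q` averaged over `π*` equal to `πP`.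
-/

open ENNReal

section Splitting

variable {C : Set X} {δ : ℝ}

open Classical in
lemma lintegral_splitMeasure (hC : MeasurableSet C) (μ : Measure X) {f : X × Bool → ℝ≥0∞}
    (hf : Measurable f) :
    ∫⁻ z, f z ∂splitMeasure C δ μ = ∫⁻ x, (if x ∈ C then
      ENNReal.ofReal (1 - δ) * f (x, false) + ENNReal.ofReal δ * f (x, true)
      else f (x, false)) ∂μ := by
  rw [splitMeasure, lintegral_add_measure, lintegral_map hf measurable_prodMk_right,
    lintegral_map hf measurable_prodMk_right, lintegral_add_measure, lintegral_smul_measure,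
    lintegral_smul_measure]
  conv_rhs => rw [← lintegral_add_compl _ hC]
  rw [setLIntegral_congr_fun hC fun x hx => if_pos hx,
    setLIntegral_congr_fun hC.compl fun x hx => if_neg hx,
    lintegral_add_left (f := fun x => ENNReal.ofReal (1 - δ) * f (x, false)) (by fun_prop),
    lintegral_const_mul' _ _ ofReal_ne_top, lintegral_const_mul' _ _ ofReal_ne_top]
  simp only [smul_eq_mul]
  ring

lemma splitMeasure_bind_apply {Y : Type*} [MeasurableSpace Y] (hC : MeasurableSet C)
    {m : Measure Y} {μ : Y → Measure X} (hμ : AEMeasurable μ m) {G : Set (X × Bool)}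
    (hG : MeasurableSet G) :
    splitMeasure C δ (m.bind μ) G = ∫⁻ a, splitMeasure C δ (μ a) G ∂m := by
  have hG1 : Measurable (G.indicator (1 : X × Bool → ℝ≥0∞)) := measurable_one.indicator hG
  simp only [← lintegral_indicator_one hG, lintegral_splitMeasure hC _ hG1]
  exact Measure.lintegral_bind hμ (Measurable.ite hC (by fun_prop) (by fun_prop)).aemeasurable

lemma map_fst_splitMeasure (hC : MeasurableSet C) (hδ0 : 0 ≤ δ) (hδ1 : δ ≤ 1) (μ : Measure X) :
    (splitMeasure C δ μ).map Prod.fst = μ := by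
  have hfst : ∀ b : Bool, Prod.fst ∘ (fun x : X => (x, b)) = id := fun _ => rfl
  rw [splitMeasure, Measure.map_add _ _ measurable_fst, Measure.map_map measurable_fst
    measurable_prodMk_right, Measure.map_map measurable_fst measurable_prodMk_right, hfst,
    hfst, Measure.map_id, Measure.map_id, add_right_comm, ← add_smul,
    ← ofReal_add (by linarith) hδ0, sub_add_cancel, ofReal_one, one_smul,
    Measure.restrict_add_restrict_compl hC]

end Splitting

lemma map_fst_apply_eq_add {μ : Measure (X × Bool)} {Γ : Set X} (hΓ : MeasurableSet Γ) :
    μ.map Prod.fst Γ = μ (Γ ×ˢ {false}) + μ (Γ ×ˢ {true}) := by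
  have hunion : Prod.fst ⁻¹' Γ = Γ ×ˢ {false} ∪ Γ ×ˢ ({true} : Set Bool) := by
    ext ⟨x, b⟩; cases b <;> simp
  rw [Measure.map_apply measurable_fst hΓ, hunion,
    measure_union (Set.disjoint_prod.2 (Or.inr (by simp))) (hΓ.prod (measurableSet_singleton _))]

section SplitKernel

variable {P : Kernel X X} {ν : Measure X} {C : Set X} {δ : ℝ}

lemma smul_le_of_minorization (hδ : 0 ≤ δ)
    (hminor : ∀ x, ∀ A : Set X, MeasurableSet A →
      ENNReal.ofReal (2 * δ) * C.indicator 1 x * ν A ≤ P x A) {x : X} (hx : x ∈ C) :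
    ENNReal.ofReal δ • ν ≤ P x := by
  refine Measure.le_iff.2 fun A hA => ?_
  calc (ENNReal.ofReal δ • ν) A ≤ ENNReal.ofReal (2 * δ) * C.indicator 1 x * ν A := by
        rw [Set.indicator_of_mem hx, Pi.one_apply, mul_one, Measure.smul_apply, smul_eq_mul]
        gcongr
        linarith
    _ ≤ P x A := hminor x A hA

lemma splitQ_true (x : X) : splitQ P ν C δ (x, true) = ν :=
  if_pos rfl

variable [IsFiniteMeasure ν]

open Classical in
lemma splitQ_apply (hsub : ∀ x ∈ C, ENNReal.ofReal δ • ν ≤ P x) (z : X × Bool) {A : Set X}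
    (hA : MeasurableSet A) :
    splitQ P ν C δ z A = if z.2 = true then ν A else if z.1 ∈ C then
      (ENNReal.ofReal (1 - δ))⁻¹ * (P z.1 A - ENNReal.ofReal δ * ν A) else P z.1 A := by
  have := ν.smul_finite (c := ENNReal.ofReal δ) ofReal_ne_top
  unfold splitQ
  split_ifs with htrue hz
  · rfl
  · rw [Measure.smul_apply, Measure.sub_apply hA (hsub _ hz), Measure.smul_apply, smul_eq_mul,
      smul_eq_mul]
  · rfl

lemma measurable_splitQ (hC : MeasurableSet C) (hsub : ∀ x ∈ C, ENNReal.ofReal δ • ν ≤ P x) :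
    Measurable (splitQ P ν C δ) := by
  refine Measure.measurable_of_measurable_coe _ fun A hA => ?_
  simp_rw [splitQ_apply hsub _ hA]
  have hPA := P.measurable_coe hA
  exact Measurable.ite (measurable_snd (measurableSet_singleton true)) measurable_const
    (Measurable.ite (measurable_fst hC) (by fun_prop) (by fun_prop))

lemma ofReal_mul_splitQ_false_add (hδ : δ < 1) (hsub : ∀ x ∈ C, ENNReal.ofReal δ • ν ≤ P x)
    {x : X} (hx : x ∈ C) {A : Set X} (hA : MeasurableSet A) :
    ENNReal.ofReal (1 - δ) * splitQ P ν C δ (x, false) A + ENNReal.ofReal δ * ν A = P x A := by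
  have hc : ENNReal.ofReal (1 - δ) ≠ 0 := by simpa using hδ
  rw [splitQ_apply hsub _ hA, if_neg Bool.false_ne_true, if_pos hx, ← mul_assoc,
    ENNReal.mul_inv_cancel hc ofReal_ne_top, one_mul, tsub_add_cancel_of_le]
  simpa using Measure.le_iff.1 (hsub x hx) A hA

lemma lintegral_splitQ_splitMeasure (hC : MeasurableSet C) (hδ : δ < 1)
    (hsub : ∀ x ∈ C, ENNReal.ofReal δ • ν ≤ P x) (μ : Measure X) {A : Set X}
    (hA : MeasurableSet A) :
    ∫⁻ z, splitQ P ν C δ z A ∂splitMeasure C δ μ = ∫⁻ x, P x A ∂μ := by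
  rw [lintegral_splitMeasure hC μ (f := fun z => splitQ P ν C δ z A)
    ((Measure.measurable_coe hA).comp (measurable_splitQ hC hsub))]
  refine lintegral_congr fun x => ?_
  split_ifs with hx
  · rw [splitQ_true, ofReal_mul_splitQ_false_add hδ hsub hx hA]
  · simp [splitQ_apply hsub _ hA, hx]

end SplitKernel

theorem split_invariant_projects_general
    (P : Kernel X X)
    (C : Set X) (hC : MeasurableSet C)
    (ν : Measure X) [IsProbabilityMeasure ν]
    (δ : ℝ) (hδ0 : 0 < δ) (hδ : δ < 1 / 2)
    (hminor : ∀ x, ∀ A : Set X, MeasurableSet A →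
      ENNReal.ofReal (2 * δ) * C.indicator 1 x * ν A ≤ P x A)
    (πs : Measure (X × Bool)) [IsProbabilityMeasure πs]
    (hinv : ∀ G : Set (X × Bool), MeasurableSet G →
      ∫⁻ xs, splitKernel P ν C δ xs G ∂ πs = πs G) :
    IsProbabilityMeasure (πs.map Prod.fst) ∧
    (∀ Γ : Set X, MeasurableSet Γ →
      (πs.map Prod.fst) Γ = πs (Γ ×ˢ {false}) + πs (Γ ×ˢ {true})) ∧
    (∀ Γ : Set X, MeasurableSet Γ →
      ∫⁻ x, P x Γ ∂ (πs.map Prod.fst) = (πs.map Prod.fst) Γ) ∧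
    πs = splitMeasure C δ (πs.map Prod.fst) := by
  have hδ1 : δ < 1 := by linarith
  have hsub : ∀ x ∈ C, ENNReal.ofReal δ • ν ≤ P x :=
    fun x hx => smul_le_of_minorization hδ0.le hminor hx
  have hQ := measurable_splitQ hC hsub
  have hπs : πs = splitMeasure C δ (πs.bind (splitQ P ν C δ)) := by
    ext G hG
    rw [splitMeasure_bind_apply hC hQ.aemeasurable hG, ← hinv G hG]
    rfl
  have hπ : πs.map Prod.fst = πs.bind (splitQ P ν C δ) := by
    conv_lhs => rw [hπs]
    exact map_fst_splitMeasure hC hδ0.le hδ1.le _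
  rw [← hπ] at hπs
  refine ⟨Measure.isProbabilityMeasure_map measurable_fst.aemeasurable,
    fun Γ hΓ => map_fst_apply_eq_add hΓ, fun Γ hΓ => ?_, hπs⟩
  rw [← lintegral_splitQ_splitMeasure hC hδ1 hsub _ hΓ, ← hπs, hπ,
    Measure.bind_apply hΓ hQ.aemeasurable]

/-- if the split chain admits an invariant probability measure
`π̌`, then `π(Γ) = π̌(Γ×{0}) + π̌(Γ×{1})` is an invariant probability measure
for the original chain, and `π̌ = π*`. -/
theorem split_invariant_projects
    (P : Kernel X X) [IsMarkovKernel P]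
    (C : Set X) (hC : MeasurableSet C)
    (ν : Measure X) [IsProbabilityMeasure ν] (hνC : ν C = 1)
    (δ : ℝ) (hδ0 : 0 < δ) (hδ : δ < 1 / 2)
    (hminor : ∀ x, ∀ A : Set X, MeasurableSet A →
      ENNReal.ofReal (2 * δ) * C.indicator 1 x * ν A ≤ P x A)
    (πs : Measure (X × Bool)) [IsProbabilityMeasure πs]
    (hinv : ∀ G : Set (X × Bool), MeasurableSet G →
      ∫⁻ xs, splitKernel P ν C δ xs G ∂ πs = πs G) :
    IsProbabilityMeasure (πs.map Prod.fst) ∧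
    (∀ Γ : Set X, MeasurableSet Γ →
      (πs.map Prod.fst) Γ = πs (Γ ×ˢ {false}) + πs (Γ ×ˢ {true})) ∧
    (∀ Γ : Set X, MeasurableSet Γ →
      ∫⁻ x, P x Γ ∂ (πs.map Prod.fst) = (πs.map Prod.fst) Γ) ∧
    πs = splitMeasure C δ (πs.map Prod.fst) :=
  split_invariant_projects_general P C hC ν δ hδ0 hδ hminor πs hinv
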